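/- Let T be a contraction on a complex separable Hilbert space H and let U^[T] be its Schaffer operator on ℓ²(ℤ; H). Let ι : H → ℓ²(ℤ; H) be the isometric embedding sending x to the sequence whose 0-th entry is x and all other entries are 0. Then U^[T] is a unitary dilation of T: for every integer n ≥ 0 and all x, y ∈ H, ⟨(U^[T])ⁿ ι x, ι y⟩ = ⟨Tⁿ x, y⟩. -/

import Mathlib

open ContinuousLinearMap MeasureTheory Polynomial
noncomputable section

variable {H : Type} [NormedAddCommGroup H] [InnerProductSpace ℂ H] [CompleteSpace H]

/-- A canonical orthonormal (Hilbert) basis set of the Hilbert space `H`. -/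
def stdONSet (H : Type) [NormedAddCommGroup H] [InnerProductSpace ℂ H] [CompleteSpace H] :
    Set H := (exists_hilbertBasis ℂ H).choose

/-- The diagonal sum of an operator with respect to the canonical orthonormal basis; for a
trace class operator this is its trace. -/
def opTrace (T : H →L[ℂ] H) : ℂ := ∑' x : stdONSet H, inner ℂ (x : H) (T x)

/-- `A ^ r` for a positive operator `A`, via the continuous functional calculus. -/
def opPow (A : H →L[ℂ] H) (r : ℝ) : H →L[ℂ] H := cfc (fun x : ℝ => x ^ r) A

/-- Membership in the Schatten–von Neumann class `S_p`: the diagonal sum of the positive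
operator `|T|^p = (T^*T)^{p/2}` with respect to an orthonormal basis is finite. -/
def MemSchatten (p : ℝ) (T : H →L[ℂ] H) : Prop :=
  Summable fun x : stdONSet H =>
    Complex.re (inner ℂ (x : H) ((opPow (adjoint T * T) (p / 2)) x))

/-- The defect operator `D_T = (I - T^*T)^{1/2}` of a contraction `T`. -/
def defect (T : H →L[ℂ] H) : H →L[ℂ] H := opPow (1 - adjoint T * T) (1 / 2)

/-- The defining formula of the Schaffer matrix dilation of a contraction `T`, acting on
two-sided square-summable `H`-valued sequences: the `0`-th entry of the image is
`T v₀ + D_{T*} v₁`, the `(-1)`-st entry is `D_T v₀ - T^* v₁`, and the `j`-th entry is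
`v_{j+1}` for `j ∉ {0, -1}`. -/
def schafferFun (T : H →L[ℂ] H) (v : lp (fun _ : ℤ => H) 2) : ℤ → H := fun j =>
  if j = 0 then T (v 0) + defect (adjoint T) (v 1)
  else if j = -1 then defect T (v 0) - adjoint T (v 1)
  else v (j + 1)

/-!
The sequences vanishing at all positive indices form a subspace invariant under `U^[T]`, and on
it the `0`-th coordinate of `U^[T] v` is `T v₀`, since the defect term `D_{T*} v₁` drops out.
Starting from `ι x`, induction gives `(U^[T])ⁿ ι x = ι (Tⁿ x) + (terms at negative indices)`,
and the negative entries are orthogonal to `ι y`.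
-/

section Schaffer

variable (T : H →L[ℂ] H) {v : lp (fun _ : ℤ => H) 2}

lemma schafferFun_of_pos {j : ℤ} (hj : 0 < j) : schafferFun T v j = v (j + 1) := by
  simp only [schafferFun, if_neg hj.ne', if_neg (show j ≠ -1 by omega)]

lemma schafferFun_zero (hv : v 1 = 0) : schafferFun T v 0 = T (v 0) := by
  simp only [schafferFun, if_true, hv, map_zero, add_zero]

variable {T} {U : lp (fun _ : ℤ => H) 2 →L[ℂ] lp (fun _ : ℤ => H) 2}
  (hU : ∀ (v : lp (fun _ : ℤ => H) 2) (j : ℤ), (U v) j = schafferFun T v j)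
include hU

lemma schaffer_pow_single_zero (n : ℕ) (x : H) :
    (∀ j : ℤ, 0 < j → (U ^ n) (lp.single 2 0 x) j = 0) ∧
      (U ^ n) (lp.single 2 0 x) 0 = (T ^ n) x := by
  induction n with
  | zero =>
    refine ⟨fun j hj => ?_, by simp⟩
    simp [lp.single_apply, hj.ne']
  | succ n ih =>
    obtain ⟨hpos, hzero⟩ := ih
    rw [pow_succ', mul_apply_eq_comp, pow_succ', mul_apply_eq_comp]
    refine ⟨fun j hj => ?_, ?_⟩
    · rw [hU, schafferFun_of_pos T hj, hpos (j + 1) (by omega)]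
    · rw [hU, schafferFun_zero T (hpos 1 one_pos), hzero]

end Schaffer

theorem schaffer_operator_is_dilation_general
    (T : H →L[ℂ] H)
    (U : lp (fun _ : ℤ => H) 2 →L[ℂ] lp (fun _ : ℤ => H) 2)
    (hU : ∀ (v : lp (fun _ : ℤ => H) 2) (j : ℤ), (U v) j = schafferFun T v j) :
    ∀ (n : ℕ) (x y : H),
      (inner ℂ ((U ^ n) (lp.single 2 (0 : ℤ) x)) (lp.single 2 (0 : ℤ) y) : ℂ) =
        (inner ℂ ((T ^ n) x) y : ℂ) := by
  intro n x y
  rw [lp.inner_single_right, (schaffer_pow_single_zero hU n x).2]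

/-- The Schaffer operator `U^[T]` is a unitary dilation of `T`: compressing its powers to
the subspace `ι(H)` (the `0`-th coordinate copy of `H`) gives the powers of `T`. -/
theorem schaffer_operator_is_dilation
    [TopologicalSpace.SeparableSpace H]
    (T : H →L[ℂ] H) (hT : ‖T‖ ≤ 1)
    (U : lp (fun _ : ℤ => H) 2 →L[ℂ] lp (fun _ : ℤ => H) 2)
    (hU : ∀ (v : lp (fun _ : ℤ => H) 2) (j : ℤ), (U v) j = schafferFun T v j) :
    ∀ (n : ℕ) (x y : H),
      (inner ℂ ((U ^ n) (lp.single 2 (0 : ℤ) x)) (lp.single 2 (0 : ℤ) y) : ℂ) =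
        (inner ℂ ((T ^ n) x) y : ℂ) :=
  schaffer_operator_is_dilation_general T U hU
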